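/- Under decay of correlations against L¹ with non-increasing rate γ → 0, let A ∈ ℬ with 1_A ∈ 𝒞, and ℓ, t positive integers with ℓ·P(A) < 1; set L = 1 − ℓ·P(A) and Υ_A := t[P(A) + ‖1_A‖_𝒞 γ(t)] + Ξ_{A,ℓ}. Then for every k ∈ ℕ: |P(𝒲_{0, k(ℓ+t)}(A)) − L^k| ≤ k·Υ_A·(L + Υ_A)^{k-1}. -/

import Mathlib

open MeasureTheory

def avoidWindow {X : Type*} (T : X → X) (s ℓ : ℕ) (A : Set X) : Set X :=
  ⋂ i ∈ Finset.Ico s (s + ℓ), T^[i] ⁻¹' Aᶜ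

/-!
Cut `[0, k(ℓ+t))` into `k` blocks, each a window of length `ℓ` followed by a gap of length `t`,
and peel off the first block. For an event `W` of the future, Bonferroni's inequalities for the
`ℓ` possible visits to `A` in the window, together with decay of correlations across the gap,
give `P(𝒲_{0,ℓ} ∩ f^{-(ℓ+t)} W) = (1 - ℓ P(A)) P(W)` up to `Ξ_{A,ℓ} P(W)`; pairs of visits closer
than the first return time `R` are impossible, which is why only `q ≥ R` enters `Ξ`. Visits
during the gap cost at most `t [P(A) + ‖1_A‖ γ(t)]` relative to the future with the gap's length
removed. For `a_j = P(𝒲_{0,j(ℓ+t)})` and `b_j = P(𝒲_{0,j(ℓ+t)-t}) ≤ (L + Ξ)^j` this yields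
`|a_{j+1} - L a_j| ≤ Υ b_j`, and the estimate follows by induction on `k`.
-/

open Finset

section Windows

variable {X : Type*} {f : X → X} {A : Set X} {s m : ℕ}

lemma mem_avoidWindow {x : X} :
    x ∈ avoidWindow f s m A ↔ ∀ i, s ≤ i → i < s + m → f^[i] x ∉ A := by
  simp [avoidWindow]

lemma compl_avoidWindow : (avoidWindow f s m A)ᶜ = ⋃ i ∈ Ico s (s + m), f^[i] ⁻¹' A := by
  simp [avoidWindow]

@[simp]
lemma avoidWindow_zero_right : avoidWindow f s 0 A = Set.univ := by
  simp [avoidWindow]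

lemma avoidWindow_subset_avoidWindow {s' m' : ℕ} (h : Ico s' (s' + m') ⊆ Ico s (s + m)) :
    avoidWindow f s m A ⊆ avoidWindow f s' m' A := fun _ hx =>
  mem_avoidWindow.2 fun i hi hi' =>
    have hi'' := mem_Ico.1 (h (mem_Ico.2 ⟨hi, hi'⟩))
    mem_avoidWindow.1 hx i hi''.1 hi''.2

lemma preimage_iterate_avoidWindow (a : ℕ) :
    f^[a] ⁻¹' avoidWindow f s m A = avoidWindow f (s + a) m A := by
  ext x
  simp only [Set.mem_preimage, mem_avoidWindow, ← Function.iterate_add_apply]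
  refine ⟨fun h i hi hi' => ?_, fun h i hi hi' => h (i + a) (by omega) (by omega)⟩
  simpa [Nat.sub_add_cancel (show a ≤ i by omega)] using h (i - a) (by omega) (by omega)

lemma avoidWindow_inter_avoidWindow (n : ℕ) :
    avoidWindow f s m A ∩ avoidWindow f (s + m) n A = avoidWindow f s (m + n) A := by
  ext x
  simp only [Set.mem_inter_iff, mem_avoidWindow]
  refine ⟨fun ⟨h₁, h₂⟩ i hi hi' => ?_, fun h => ⟨fun i hi hi' => h i hi (by omega),
    fun i hi hi' => h i (by omega) (by omega)⟩⟩
  rcases lt_or_ge i (s + m) with hi'' | hi''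
  · exact h₁ i hi hi''
  · exact h₂ i hi'' (by omega)

lemma measurableSet_avoidWindow [MeasurableSpace X] (hf : Measurable f) (hA : MeasurableSet A) :
    MeasurableSet (avoidWindow f s m A) :=
  Finset.measurableSet_biInter _ fun i _ => (hf.iterate i) hA.compl

lemma preimage_iterate_inter_preimage_iterate {B : Set X} {i n : ℕ} (hin : i ≤ n) :
    f^[i] ⁻¹' A ∩ f^[n] ⁻¹' B = f^[i] ⁻¹' (A ∩ f^[n - i] ⁻¹' B) := by
  rw [Set.preimage_inter, ← Set.preimage_comp, ← Function.iterate_add, Nat.sub_add_cancel hin]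

end Windows

section Errors

lemma sum_range_sum_range_sub_le {h : ℕ → ℝ} (h₀ : ∀ q, 0 ≤ h q) {R : ℕ}
    (hR : ∀ q < R, h q = 0) (ℓ : ℕ) :
    ∑ j ∈ range ℓ, ∑ i ∈ range j, h (j - i) ≤ (ℓ - R : ℕ) * ∑ q ∈ Ico R ℓ, h q := by
  have hIco : ∀ {n}, Ico R n ⊆ range n := fun hq => by simp at hq ⊢; omega
  have hS : ∑ q ∈ Ico R ℓ, h q = ∑ q ∈ range ℓ, h q :=
    sum_subset hIco fun q hq hq' => hR q (by simp at hq hq'; omega)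
  have hinner : ∀ j < ℓ, ∑ i ∈ range j, h (j - i) ≤ ∑ q ∈ Ico R ℓ, h q := fun j hj => by
    rw [hS, ← sum_image (g := (j - ·)) fun a ha b hb hab => by simp at ha hb hab; omega]
    exact sum_le_sum_of_subset_of_nonneg (fun q hq => by simp at hq ⊢; omega) fun q _ _ => h₀ q
  calc ∑ j ∈ range ℓ, ∑ i ∈ range j, h (j - i)
      = ∑ j ∈ Ico R ℓ, ∑ i ∈ range j, h (j - i) :=
        (sum_subset hIco fun j hj hj' =>
          sum_eq_zero fun i hi => hR _ (by simp at hi hj hj'; omega)).symm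
    _ ≤ ∑ j ∈ Ico R ℓ, ∑ q ∈ Ico R ℓ, h q := sum_le_sum fun j hj => hinner j (by simp at hj; omega)
    _ = (ℓ - R : ℕ) * ∑ q ∈ Ico R ℓ, h q := by rw [sum_const, Nat.card_Ico, nsmul_eq_mul]

def pairError (p : ℝ) (δ : ℕ → ℝ) (R ℓ t : ℕ) : ℝ :=
  (ℓ - R : ℕ) * (p + δ t) * ∑ q ∈ Ico R ℓ, δ q + ℓ * (ℓ - R : ℕ) * (p ^ 2 + p * δ t)

/-- The paper's `Ξ_{A,ℓ}`, with `p = P(A)` and `δ n = ‖1_A‖_𝒞 γ(n)`. -/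
def blockError (p : ℝ) (δ : ℕ → ℝ) (R ℓ t : ℕ) : ℝ :=
  ℓ * δ t + pairError p δ R ℓ t

variable {p : ℝ} {δ : ℕ → ℝ}

lemma pairError_nonneg (hp : 0 ≤ p) (hδ : ∀ n, 0 ≤ δ n) (R ℓ t : ℕ) :
    0 ≤ pairError p δ R ℓ t := by
  have := hδ t
  have : 0 ≤ ∑ q ∈ Ico R ℓ, δ q := sum_nonneg fun q _ => hδ q
  unfold pairError
  positivity

lemma blockError_nonneg (hp : 0 ≤ p) (hδ : ∀ n, 0 ≤ δ n) (R ℓ t : ℕ) :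
    0 ≤ blockError p δ R ℓ t :=
  add_nonneg (mul_nonneg (Nat.cast_nonneg ℓ) (hδ t)) (pairError_nonneg hp hδ R ℓ t)

lemma sum_pairs_le_pairError (hp : 0 ≤ p) (hδ : ∀ n, 0 ≤ δ n) (R ℓ t : ℕ) :
    ∑ j ∈ range ℓ, ∑ i ∈ range j, (if R ≤ j - i then (p + δ (j - i)) * (p + δ t) else 0) ≤
      pairError p δ R ℓ t := by
  have hsum : ∑ q ∈ Ico R ℓ, (if R ≤ q then (p + δ q) * (p + δ t) else 0) =
      (p + δ t) * ((ℓ - R : ℕ) * p + ∑ q ∈ Ico R ℓ, δ q) := by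
    rw [sum_congr rfl fun q hq => if_pos (mem_Ico.1 hq).1, ← sum_mul, sum_add_distrib, sum_const,
      Nat.card_Ico, nsmul_eq_mul]
    ring
  have hcard : ((ℓ - R : ℕ) : ℝ) ≤ ℓ := by exact_mod_cast Nat.sub_le ℓ R
  have hpt : 0 ≤ p * (p + δ t) := mul_nonneg hp (add_nonneg hp (hδ t))
  have hterm : ∀ q, 0 ≤ (p + δ q) * (p + δ t) := fun q =>
    mul_nonneg (add_nonneg hp (hδ q)) (add_nonneg hp (hδ t))
  calc _ ≤ (ℓ - R : ℕ) * ∑ q ∈ Ico R ℓ, (if R ≤ q then (p + δ q) * (p + δ t) else 0) :=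
        sum_range_sum_range_sub_le (fun q => by split_ifs; exacts [hterm q, le_rfl])
          (fun q hq => if_neg (by omega)) ℓ
    _ ≤ _ := by
      rw [hsum, pairError]
      nlinarith [mul_le_mul_of_nonneg_right hcard (mul_nonneg (Nat.cast_nonneg (ℓ - R)) hpt)]

end Errors

lemma antitone_const_mul {γ : ℕ → ℝ} {c : ℝ} (hγ : Antitone γ) (hγ₀ : ∀ n, 0 ≤ γ n)
    (hcγ : ∀ n, 0 ≤ c * γ n) : Antitone fun n => c * γ n := by
  rcases le_or_gt 0 c with hc | hc
  · exact fun m n hmn => mul_le_mul_of_nonneg_left (hγ hmn) hc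
  · have hzero : ∀ n, γ n = 0 := fun n =>
      le_antisymm (nonpos_of_mul_nonneg_right (hcγ n) hc) (hγ₀ n)
    simp [hzero, antitone_const]

section Mixing

variable {X : Type*} [MeasurableSpace X] {μ : Measure X} {f : X → X}

def HasCorrelationDecay (μ : Measure X) (f : X → X) (𝒞 : Set (X → ℝ)) (N : (X → ℝ) → ℝ)
    (γ : ℕ → ℝ) : Prop :=
  ∀ φ ∈ 𝒞, ∀ ψ : X → ℝ, Integrable ψ μ → ∀ n : ℕ,
    |(∫ x, φ x * ψ (f^[n] x) ∂μ) - (∫ x, φ x ∂μ) * ∫ x, ψ x ∂μ| ≤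
      N φ * (∫ x, |ψ x| ∂μ) * γ n

def MixesWithRate (μ : Measure X) (f : X → X) (A : Set X) (δ : ℕ → ℝ) : Prop :=
  ∀ B, MeasurableSet B → ∀ n,
    |μ.real (A ∩ f^[n] ⁻¹' B) - μ.real A * μ.real B| ≤ δ n * μ.real B

namespace HasCorrelationDecay

variable {𝒞 : Set (X → ℝ)} {N : (X → ℝ) → ℝ} {γ : ℕ → ℝ}

lemma mul_rate_nonneg [IsProbabilityMeasure μ] (h : HasCorrelationDecay μ f 𝒞 N γ) {φ : X → ℝ}
    (hφ : φ ∈ 𝒞) (n : ℕ) : 0 ≤ N φ * γ n := by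
  simpa using h φ hφ 1 (integrable_const 1) n

lemma mixesWithRate [IsFiniteMeasure μ] (h : HasCorrelationDecay μ f 𝒞 N γ) (hf : Measurable f)
    {A : Set X} (hA : MeasurableSet A) (hind : A.indicator (fun _ => (1 : ℝ)) ∈ 𝒞) :
    MixesWithRate μ f A fun n => N (A.indicator fun _ => 1) * γ n := by
  intro B hB n
  have hAB : MeasurableSet (A ∩ f^[n] ⁻¹' B) := hA.inter (hf.iterate n hB)
  have hprod : (fun x => A.indicator (fun _ => (1 : ℝ)) x * B.indicator (fun _ => 1) (f^[n] x)) =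
      (A ∩ f^[n] ⁻¹' B).indicator 1 := by
    ext x
    by_cases hx : x ∈ A <;> by_cases hx' : f^[n] x ∈ B <;> simp [hx, hx']
  have habs : (fun x => |B.indicator (fun _ => (1 : ℝ)) x|) = B.indicator fun _ => 1 := by
    ext x
    by_cases hx : x ∈ B <;> simp [hx]
  have := h _ hind (B.indicator fun _ => 1) ((integrable_const 1).indicator hB) n
  rw [hprod, habs] at this
  simpa [integral_indicator_one hAB, integral_indicator_const (1 : ℝ) hA,
    integral_indicator_const (1 : ℝ) hB, mul_right_comm] using this

end HasCorrelationDecay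

namespace MixesWithRate

variable {A : Set X} {δ : ℕ → ℝ}

lemma abs_measureReal_inter_preimage_sub_le (h : MixesWithRate μ f A δ) (hδ : Antitone δ)
    {B : Set X} (hB : MeasurableSet B) {n t : ℕ} (htn : t ≤ n) :
    |μ.real (A ∩ f^[n] ⁻¹' B) - μ.real A * μ.real B| ≤ δ t * μ.real B :=
  (h B hB n).trans (mul_le_mul_of_nonneg_right (hδ htn) measureReal_nonneg)

lemma measureReal_inter_preimage_le (h : MixesWithRate μ f A δ) (hδ : Antitone δ)
    {B : Set X} (hB : MeasurableSet B) {n t : ℕ} (htn : t ≤ n) :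
    μ.real (A ∩ f^[n] ⁻¹' B) ≤ (μ.real A + δ t) * μ.real B := by
  linarith [(abs_le.1 (h.abs_measureReal_inter_preimage_sub_le hδ hB htn)).2]

end MixesWithRate

lemma MeasureTheory.MeasurePreserving.measureReal_preimage_iterate_inter
    (hf : MeasurePreserving f μ μ) {A B : Set X} (hA : MeasurableSet A) (hB : MeasurableSet B)
    {i n : ℕ} (hin : i ≤ n) :
    μ.real (f^[i] ⁻¹' A ∩ f^[n] ⁻¹' B) = μ.real (A ∩ f^[n - i] ⁻¹' B) := by
  rw [preimage_iterate_inter_preimage_iterate hin,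
    (hf.iterate i).measureReal_preimage (hA.inter (hf.measurable.iterate _ hB)).nullMeasurableSet]

lemma sum_measureReal_le_measureReal_biUnion_add_sum_inter [IsFiniteMeasure μ] {F : ℕ → Set X}
    (hF : ∀ i, MeasurableSet (F i)) (n : ℕ) :
    ∑ i ∈ range n, μ.real (F i) ≤
      μ.real (⋃ i ∈ range n, F i) + ∑ j ∈ range n, ∑ i ∈ range j, μ.real (F i ∩ F j) := by
  induction n with
  | zero => simp
  | succ n ih =>
    have hunion := measureReal_union_add_inter (μ := μ) (s := ⋃ i ∈ range n, F i) (hF n)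
      (measure_ne_top _ _)
    have hinter : μ.real ((⋃ i ∈ range n, F i) ∩ F n) ≤ ∑ i ∈ range n, μ.real (F i ∩ F n) := by
      rw [Set.iUnion₂_inter]
      exact measureReal_biUnion_finset_le _ _
    rw [sum_range_succ, sum_range_succ, range_add_one, set_biUnion_insert, Set.union_comm]
    linarith

end Mixing

section BlockEstimates

variable {X : Type*} [MeasurableSpace X] {μ : Measure X} {f : X → X} {A : Set X}
  {δ : ℕ → ℝ} {R : ℕ}

lemma measureReal_preimage_inter_preimage_inter_le (hf : MeasurePreserving f μ μ)
    (hA : MeasurableSet A) (hmix : MixesWithRate μ f A δ) (hδ : Antitone δ)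
    (hδ₀ : ∀ n, 0 ≤ δ n) (hR : ∀ i, 0 < i → i < R → A ∩ f^[i] ⁻¹' A = ∅)
    {W : Set X} (hW : MeasurableSet W) {i j n t : ℕ} (hij : i < j) (hjn : j + t ≤ n) :
    μ.real (f^[i] ⁻¹' A ∩ f^[n] ⁻¹' W ∩ (f^[j] ⁻¹' A ∩ f^[n] ⁻¹' W)) ≤
      (if R ≤ j - i then (μ.real A + δ (j - i)) * (μ.real A + δ t) else 0) * μ.real W := by
  set B := A ∩ f^[n - j] ⁻¹' W
  have hB : MeasurableSet B := hA.inter (hf.measurable.iterate _ hW)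
  have hset : f^[i] ⁻¹' A ∩ f^[n] ⁻¹' W ∩ (f^[j] ⁻¹' A ∩ f^[n] ⁻¹' W) =
      f^[i] ⁻¹' A ∩ f^[j] ⁻¹' B := by
    ext x
    simp only [B, Set.mem_inter_iff, Set.mem_preimage, ← Function.iterate_add_apply,
      Nat.sub_add_cancel (by omega : j ≤ n)]
    tauto
  rw [hset, hf.measureReal_preimage_iterate_inter hA hB hij.le]
  split_ifs with hRji
  · calc μ.real (A ∩ f^[j - i] ⁻¹' B) ≤ (μ.real A + δ (j - i)) * μ.real B :=
          hmix.measureReal_inter_preimage_le hδ hB le_rfl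
      _ ≤ (μ.real A + δ (j - i)) * ((μ.real A + δ t) * μ.real W) := by
          gcongr
          · exact add_nonneg measureReal_nonneg (hδ₀ _)
          · exact hmix.measureReal_inter_preimage_le hδ hW (by omega)
      _ = _ := by ring
  · have hempty : A ∩ f^[j - i] ⁻¹' B = ∅ :=
      Set.subset_eq_empty (Set.inter_subset_inter_right _ (Set.preimage_mono Set.inter_subset_left))
        (hR _ (by omega) (by omega))
    simp [hempty]

lemma abs_sum_measureReal_preimage_inter_sub_le (hf : MeasurePreserving f μ μ)
    (hA : MeasurableSet A) (hmix : MixesWithRate μ f A δ) (hδ : Antitone δ) (ℓ t : ℕ)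
    {W : Set X} (hW : MeasurableSet W) :
    |∑ i ∈ range ℓ, μ.real (f^[i] ⁻¹' A ∩ f^[ℓ + t] ⁻¹' W) - ℓ * μ.real A * μ.real W| ≤
      ℓ * δ t * μ.real W := by
  have hterm : ∀ i ∈ range ℓ,
      |μ.real (f^[i] ⁻¹' A ∩ f^[ℓ + t] ⁻¹' W) - μ.real A * μ.real W| ≤ δ t * μ.real W :=
    fun i hi => by
      rw [hf.measureReal_preimage_iterate_inter hA hW (by simp at hi; omega)]
      exact hmix.abs_measureReal_inter_preimage_sub_le hδ hW (by simp at hi; omega)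
  calc _ = |∑ i ∈ range ℓ, (μ.real (f^[i] ⁻¹' A ∩ f^[ℓ + t] ⁻¹' W) - μ.real A * μ.real W)| := by
        rw [sum_sub_distrib, sum_const, card_range, nsmul_eq_mul, mul_assoc]
    _ ≤ ∑ i ∈ range ℓ, δ t * μ.real W := (abs_sum_le_sum_abs _ _).trans (sum_le_sum hterm)
    _ = ℓ * δ t * μ.real W := by rw [sum_const, card_range, nsmul_eq_mul, mul_assoc]

variable [IsFiniteMeasure μ]

lemma measureReal_avoidWindow_inter (hf : Measurable f) (hA : MeasurableSet A) (ℓ : ℕ)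
    (C : Set X) :
    μ.real (avoidWindow f 0 ℓ A ∩ C) = μ.real C - μ.real (⋃ i ∈ range ℓ, f^[i] ⁻¹' A ∩ C) := by
  have hdiff : C \ avoidWindow f 0 ℓ A = ⋃ i ∈ range ℓ, f^[i] ⁻¹' A ∩ C := by
    rw [Set.sdiff_eq, compl_avoidWindow, Set.inter_iUnion₂, zero_add, ← range_eq_Ico]
    simp only [Set.inter_comm C]
  rw [Set.inter_comm, ← hdiff, eq_sub_iff_add_eq]
  exact measureReal_inter_add_sdiff (measurableSet_avoidWindow hf hA)

theorem abs_measureReal_avoidWindow_inter_preimage_sub_le (hf : MeasurePreserving f μ μ)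
    (hA : MeasurableSet A) (hmix : MixesWithRate μ f A δ) (hδ : Antitone δ)
    (hδ₀ : ∀ n, 0 ≤ δ n) (hR : ∀ i, 0 < i → i < R → A ∩ f^[i] ⁻¹' A = ∅) (ℓ t : ℕ)
    {W : Set X} (hW : MeasurableSet W) :
    |μ.real (avoidWindow f 0 ℓ A ∩ f^[ℓ + t] ⁻¹' W) - (1 - ℓ * μ.real A) * μ.real W| ≤
      blockError (μ.real A) δ R ℓ t * μ.real W := by
  set F : ℕ → Set X := fun i => f^[i] ⁻¹' A ∩ f^[ℓ + t] ⁻¹' W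
  have hF : ∀ i, MeasurableSet (F i) := fun i =>
    (hf.measurable.iterate i hA).inter (hf.measurable.iterate _ hW)
  have hpairs : ∑ j ∈ range ℓ, ∑ i ∈ range j, μ.real (F i ∩ F j) ≤
      pairError (μ.real A) δ R ℓ t * μ.real W := by
    refine le_trans ?_ (mul_le_mul_of_nonneg_right
      (sum_pairs_le_pairError measureReal_nonneg hδ₀ R ℓ t) measureReal_nonneg)
    simp only [sum_mul]
    exact sum_le_sum fun j hj => sum_le_sum fun i hi =>
      measureReal_preimage_inter_preimage_inter_le hf hA hmix hδ hδ₀ hR hW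
        (by simpa using hi) (by simp at hj; omega)
  have hbonf := sum_measureReal_le_measureReal_biUnion_add_sum_inter (μ := μ) hF ℓ
  have hunion := measureReal_biUnion_finset_le (μ := μ) (range ℓ) F
  have hsingle := abs_le.1 (abs_sum_measureReal_preimage_inter_sub_le hf hA hmix hδ ℓ t hW)
  have hpair₀ := mul_nonneg (pairError_nonneg (measureReal_nonneg (μ := μ) (s := A)) hδ₀ R ℓ t)
    (measureReal_nonneg (μ := μ) (s := W))
  rw [measureReal_avoidWindow_inter hf.measurable hA, (hf.iterate _).measureReal_preimage
    hW.nullMeasurableSet, abs_le, blockError, add_mul]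
  constructor <;> linarith

lemma measureReal_avoidWindow_inter_avoidWindow_le (hf : MeasurePreserving f μ μ)
    (hA : MeasurableSet A) (hmix : MixesWithRate μ f A δ) (hδ : Antitone δ) (ℓ t m : ℕ) :
    μ.real (avoidWindow f 0 ℓ A ∩ avoidWindow f (ℓ + t) m A) ≤
      μ.real (avoidWindow f 0 (ℓ + t + m) A) +
        t * ((μ.real A + δ t) * μ.real (avoidWindow f 0 (m - t) A)) := by
  have hW := measurableSet_avoidWindow (s := 0) (m := m - t) hf.measurable hA
  have hgap := measurableSet_avoidWindow (s := ℓ) (m := t) hf.measurable hA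
  set V := avoidWindow f 0 ℓ A ∩ avoidWindow f (ℓ + t) m A
  have hin : V ∩ avoidWindow f ℓ t A = avoidWindow f 0 (ℓ + t + m) A := by
    have h₁ := avoidWindow_inter_avoidWindow (f := f) (A := A) (s := 0) (m := ℓ) t
    have h₂ := avoidWindow_inter_avoidWindow (f := f) (A := A) (s := 0) (m := ℓ + t) m
    simp only [zero_add] at h₁ h₂
    rw [Set.inter_right_comm, h₁, h₂]
  have hout : V \ avoidWindow f ℓ t A ⊆
      ⋃ i ∈ Ico ℓ (ℓ + t), f^[i] ⁻¹' A ∩ avoidWindow f (ℓ + t) m A := by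
    rw [← Set.iUnion₂_inter, ← compl_avoidWindow, Set.sdiff_eq, Set.inter_comm]
    exact Set.inter_subset_inter_right _ Set.inter_subset_right
  have hterm : ∀ i ∈ Ico ℓ (ℓ + t), μ.real (f^[i] ⁻¹' A ∩ avoidWindow f (ℓ + t) m A) ≤
      (μ.real A + δ t) * μ.real (avoidWindow f 0 (m - t) A) := fun i hi => by
    calc μ.real (f^[i] ⁻¹' A ∩ avoidWindow f (ℓ + t) m A)
        ≤ μ.real (f^[i] ⁻¹' A ∩ f^[i + t] ⁻¹' avoidWindow f 0 (m - t) A) := by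
          rw [preimage_iterate_avoidWindow, zero_add]
          exact measureReal_mono (Set.inter_subset_inter_right _
            (avoidWindow_subset_avoidWindow fun j hj => by simp at hi hj ⊢; omega))
            (measure_ne_top _ _)
      _ = μ.real (A ∩ f^[t] ⁻¹' avoidWindow f 0 (m - t) A) := by
          rw [hf.measureReal_preimage_iterate_inter hA hW (by omega), Nat.add_sub_cancel_left]
      _ ≤ _ := hmix.measureReal_inter_preimage_le hδ hW le_rfl
  calc μ.real V = μ.real (V ∩ avoidWindow f ℓ t A) + μ.real (V \ avoidWindow f ℓ t A) :=
        (measureReal_inter_add_sdiff hgap).symm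
    _ ≤ μ.real (avoidWindow f 0 (ℓ + t + m) A) +
          ∑ i ∈ Ico ℓ (ℓ + t), μ.real (f^[i] ⁻¹' A ∩ avoidWindow f (ℓ + t) m A) := by
        rw [hin]
        gcongr
        exact (measureReal_mono hout (measure_ne_top _ _)).trans (measureReal_biUnion_finset_le _ _)
    _ ≤ μ.real (avoidWindow f 0 (ℓ + t + m) A) +
          ∑ i ∈ Ico ℓ (ℓ + t), (μ.real A + δ t) * μ.real (avoidWindow f 0 (m - t) A) := by
        gcongr with i hi
        exact hterm i hi
    _ = _ := by rw [sum_const, Nat.card_Ico, Nat.add_sub_cancel_left, nsmul_eq_mul]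

theorem measureReal_avoidWindow_add_le (hf : MeasurePreserving f μ μ) (hA : MeasurableSet A)
    (hmix : MixesWithRate μ f A δ) (hδ : Antitone δ) (hδ₀ : ∀ n, 0 ≤ δ n)
    (hR : ∀ i, 0 < i → i < R → A ∩ f^[i] ⁻¹' A = ∅) (ℓ t m : ℕ) :
    μ.real (avoidWindow f 0 (ℓ + m) A) ≤
      (1 - ℓ * μ.real A + blockError (μ.real A) δ R ℓ t) *
        μ.real (avoidWindow f 0 (m - t) A) := by
  have hW := measurableSet_avoidWindow (s := 0) (m := m - t) hf.measurable hA
  have hsub : avoidWindow f 0 (ℓ + m) A ⊆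
      avoidWindow f 0 ℓ A ∩ f^[ℓ + t] ⁻¹' avoidWindow f 0 (m - t) A := by
    rw [preimage_iterate_avoidWindow]
    exact Set.subset_inter (avoidWindow_subset_avoidWindow fun i hi => by simp at hi ⊢; omega)
      (avoidWindow_subset_avoidWindow fun i hi => by simp at hi ⊢; omega)
  have key := abs_measureReal_avoidWindow_inter_preimage_sub_le hf hA hmix hδ hδ₀ hR ℓ t hW
  linarith [measureReal_mono hsub (measure_ne_top μ _), (abs_le.1 key).2]

theorem measureReal_avoidWindow_le_pow (hf : MeasurePreserving f μ μ) (hA : MeasurableSet A)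
    (hmix : MixesWithRate μ f A δ) (hδ : Antitone δ) (hδ₀ : ∀ n, 0 ≤ δ n)
    (hR : ∀ i, 0 < i → i < R → A ∩ f^[i] ⁻¹' A = ∅) {ℓ : ℕ} (hℓA : ℓ * μ.real A ≤ 1) (t j : ℕ) :
    μ.real (avoidWindow f 0 (j * (ℓ + t) - t) A) ≤
      (1 - ℓ * μ.real A + blockError (μ.real A) δ R ℓ t) ^ j * μ.real Set.univ := by
  have hΞ := blockError_nonneg (measureReal_nonneg (μ := μ) (s := A)) hδ₀ R ℓ t
  simpa only [zero_mul, Nat.zero_sub, avoidWindow_zero_right] using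
    le_geom (u := fun j => μ.real (avoidWindow f 0 (j * (ℓ + t) - t) A))
    (c := 1 - ℓ * μ.real A + blockError (μ.real A) δ R ℓ t) (by linarith) j fun i _ => by
      rw [show (i + 1) * (ℓ + t) - t = ℓ + i * (ℓ + t) by rw [add_mul]; omega]
      exact measureReal_avoidWindow_add_le hf hA hmix hδ hδ₀ hR ℓ t (i * (ℓ + t))

theorem abs_measureReal_avoidWindow_add_sub_le (hf : MeasurePreserving f μ μ)
    (hA : MeasurableSet A) (hmix : MixesWithRate μ f A δ) (hδ : Antitone δ)
    (hδ₀ : ∀ n, 0 ≤ δ n) (hR : ∀ i, 0 < i → i < R → A ∩ f^[i] ⁻¹' A = ∅) (ℓ t m : ℕ) :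
    |μ.real (avoidWindow f 0 (ℓ + t + m) A) -
        (1 - ℓ * μ.real A) * μ.real (avoidWindow f 0 m A)| ≤
      (t * (μ.real A + δ t) + blockError (μ.real A) δ R ℓ t) *
        μ.real (avoidWindow f 0 (m - t) A) := by
  have key := abs_measureReal_avoidWindow_inter_preimage_sub_le hf hA hmix hδ hδ₀ hR ℓ t
    (measurableSet_avoidWindow (s := 0) (m := m) hf.measurable hA)
  rw [preimage_iterate_avoidWindow, zero_add] at key
  have hgap := measureReal_avoidWindow_inter_avoidWindow_le hf hA hmix hδ ℓ t m
  have hsub : avoidWindow f 0 (ℓ + t + m) A ⊆ avoidWindow f 0 ℓ A ∩ avoidWindow f (ℓ + t) m A :=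
    Set.subset_inter (avoidWindow_subset_avoidWindow fun i hi => by simp at hi ⊢; omega)
      (avoidWindow_subset_avoidWindow fun i hi => by simp at hi ⊢; omega)
  have hwb : μ.real (avoidWindow f 0 m A) ≤ μ.real (avoidWindow f 0 (m - t) A) :=
    measureReal_mono (avoidWindow_subset_avoidWindow fun i hi => by simp at hi ⊢; omega)
      (measure_ne_top μ _)
  have hΞ := mul_le_mul_of_nonneg_left hwb
    (blockError_nonneg (measureReal_nonneg (μ := μ) (s := A)) hδ₀ R ℓ t)
  have hgap₀ : 0 ≤ t * ((μ.real A + δ t) * μ.real (avoidWindow f 0 (m - t) A)) := by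
    have := hδ₀ t
    have : 0 ≤ μ.real A := measureReal_nonneg
    positivity
  rw [abs_le]
  constructor <;> linarith [abs_le.1 key, measureReal_mono hsub (measure_ne_top μ _)]

end BlockEstimates

lemma abs_sub_pow_le_of_step {a b : ℕ → ℝ} {L Υ : ℝ} (hL : 0 ≤ L) (hΥ : 0 ≤ Υ) (ha : a 0 = 1)
    (hab : ∀ j, |a (j + 1) - L * a j| ≤ Υ * b j) (hb : ∀ j, b j ≤ (L + Υ) ^ j) (k : ℕ) :
    |a k - L ^ k| ≤ k * Υ * (L + Υ) ^ (k - 1) := by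
  induction k with
  | zero => simp [ha]
  | succ n ih =>
    have hprev : L * |a n - L ^ n| ≤ n * Υ * (L + Υ) ^ n := by
      rcases n with _ | n
      · simp [ha]
      · calc L * |a (n + 1) - L ^ (n + 1)| ≤ (L + Υ) * ((n + 1 : ℕ) * Υ * (L + Υ) ^ n) :=
              mul_le_mul (by linarith) ih (abs_nonneg _) (by positivity)
          _ = (n + 1 : ℕ) * Υ * (L + Υ) ^ (n + 1) := by ring
    calc |a (n + 1) - L ^ (n + 1)| = |(a (n + 1) - L * a n) + L * (a n - L ^ n)| := by
          congr 1; ring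
      _ ≤ |a (n + 1) - L * a n| + L * |a n - L ^ n| :=
        (abs_add_le _ _).trans_eq (by rw [abs_mul, abs_of_nonneg hL])
      _ ≤ Υ * (L + Υ) ^ n + n * Υ * (L + Υ) ^ n :=
        add_le_add ((hab n).trans (mul_le_mul_of_nonneg_left (hb n) hΥ)) hprev
      _ = (n + 1 : ℕ) * Υ * (L + Υ) ^ (n + 1 - 1) := by
        rw [Nat.add_sub_cancel]; push_cast; ring

theorem block_power_estimate_general {X : Type*} [MeasurableSpace X] (μ : Measure X)
    [IsProbabilityMeasure μ] (f : X → X) (hf : MeasurePreserving f μ μ)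
    (𝒞 : Set (X → ℝ)) (N : (X → ℝ) → ℝ) (γ : ℕ → ℝ)
    (hγmono : Antitone γ) (hγ0 : Filter.Tendsto γ Filter.atTop (nhds 0))
    (hdecay : ∀ φ ∈ 𝒞, ∀ ψ : X → ℝ, Integrable ψ μ → ∀ n : ℕ,
      |(∫ x, φ x * ψ (f^[n] x) ∂μ) - (∫ x, φ x ∂μ) * ∫ x, ψ x ∂μ| ≤
        N φ * (∫ x, |ψ x| ∂μ) * γ n)
    (A : Set X) (hA : MeasurableSet A)
    (hind : A.indicator (fun _ => (1 : ℝ)) ∈ 𝒞)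
    -- `R` is the first return time of the set `A`.
    (R : ℕ) (hR : ∀ i, 0 < i → i < R → A ∩ f^[i] ⁻¹' A = ∅)
    (ℓ t : ℕ)
    (hℓPA : (ℓ : ℝ) * (μ A).toReal < 1)
    (L Ξ Υ : ℝ) (hL : L = 1 - (ℓ : ℝ) * (μ A).toReal)
    (hΞ : Ξ = N (A.indicator fun _ => (1 : ℝ)) * (ℓ : ℝ) * γ t +
        N (A.indicator fun _ => (1 : ℝ)) * ((ℓ - R : ℕ) : ℝ) *
          ((μ A).toReal + N (A.indicator fun _ => (1 : ℝ)) * γ t) *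
          ∑ q ∈ Finset.Ico R ℓ, γ q +
        (ℓ : ℝ) * ((ℓ - R : ℕ) : ℝ) *
          ((μ A).toReal ^ 2 + (μ A).toReal * N (A.indicator fun _ => (1 : ℝ)) * γ t))
    (hΥ : Υ = (t : ℝ) * ((μ A).toReal + N (A.indicator fun _ => (1 : ℝ)) * γ t) + Ξ)
    (k : ℕ) :
    |(μ (avoidWindow f 0 (k * (ℓ + t)) A)).toReal - L ^ k| ≤
      (k : ℝ) * Υ * (L + Υ) ^ (k - 1) := by
  have hdecay' : HasCorrelationDecay μ f 𝒞 N γ := hdecay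
  set δ : ℕ → ℝ := fun n => N (A.indicator fun _ => 1) * γ n
  have hδ₀ : ∀ n, 0 ≤ δ n := hdecay'.mul_rate_nonneg hind
  have hδ : Antitone δ := antitone_const_mul hγmono (fun n => hγmono.le_of_tendsto hγ0 n) hδ₀
  have hmix : MixesWithRate μ f A δ := hdecay'.mixesWithRate hf.measurable hA hind
  have hL' : L = 1 - ℓ * μ.real A := hL
  have hΞ' : Ξ = blockError (μ.real A) δ R ℓ t := by
    simp only [hΞ, blockError, pairError, δ, measureReal_def, ← mul_sum]
    ring
  have hΥ' : Υ = t * (μ.real A + δ t) + Ξ := hΥ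
  have hΞ₀ : 0 ≤ Ξ := hΞ' ▸ blockError_nonneg measureReal_nonneg hδ₀ R ℓ t
  have hgap : 0 ≤ t * (μ.real A + δ t) := by
    have := hδ₀ t
    have : 0 ≤ μ.real A := measureReal_nonneg
    positivity
  have hL₀ : 0 ≤ L := by linarith
  refine abs_sub_pow_le_of_step (a := fun j => μ.real (avoidWindow f 0 (j * (ℓ + t)) A))
    (b := fun j => μ.real (avoidWindow f 0 (j * (ℓ + t) - t) A)) hL₀ (by linarith) (by simp)
    (fun j => ?_) (fun j => ?_) k
  · have := abs_measureReal_avoidWindow_add_sub_le hf hA hmix hδ hδ₀ hR ℓ t (j * (ℓ + t))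
    rwa [show ℓ + t + j * (ℓ + t) = (j + 1) * (ℓ + t) by ring, ← hL', ← hΞ', ← hΥ'] at this
  · have := measureReal_avoidWindow_le_pow hf hA hmix hδ hδ₀ hR hℓPA.le t j
    rw [probReal_univ, mul_one, ← hL', ← hΞ'] at this
    exact this.trans (pow_le_pow_left₀ (by linarith) (by linarith) j)

theorem block_power_estimate {X : Type*} [MeasurableSpace X] (μ : Measure X)
    [IsProbabilityMeasure μ] (f : X → X) (hf : MeasurePreserving f μ μ)
    (𝒞 : Set (X → ℝ)) (N : (X → ℝ) → ℝ) (γ : ℕ → ℝ)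
    (hγmono : Antitone γ) (hγ0 : Filter.Tendsto γ Filter.atTop (nhds 0))
    (hdecay : ∀ φ ∈ 𝒞, ∀ ψ : X → ℝ, Integrable ψ μ → ∀ n : ℕ,
      |(∫ x, φ x * ψ (f^[n] x) ∂μ) - (∫ x, φ x ∂μ) * ∫ x, ψ x ∂μ| ≤
        N φ * (∫ x, |ψ x| ∂μ) * γ n)
    (A : Set X) (hA : MeasurableSet A)
    (hind : A.indicator (fun _ => (1 : ℝ)) ∈ 𝒞)
    -- `R` is the first return time of the set `A`.
    (R : ℕ) (hR : ∀ i, 0 < i → i < R → A ∩ f^[i] ⁻¹' A = ∅)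
    (ℓ t : ℕ) (hℓ : 0 < ℓ) (ht : 0 < t)
    (hℓPA : (ℓ : ℝ) * (μ A).toReal < 1)
    (L Ξ Υ : ℝ) (hL : L = 1 - (ℓ : ℝ) * (μ A).toReal)
    (hΞ : Ξ = N (A.indicator fun _ => (1 : ℝ)) * (ℓ : ℝ) * γ t +
        N (A.indicator fun _ => (1 : ℝ)) * ((ℓ - R : ℕ) : ℝ) *
          ((μ A).toReal + N (A.indicator fun _ => (1 : ℝ)) * γ t) *
          ∑ q ∈ Finset.Ico R ℓ, γ q +
        (ℓ : ℝ) * ((ℓ - R : ℕ) : ℝ) *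
          ((μ A).toReal ^ 2 + (μ A).toReal * N (A.indicator fun _ => (1 : ℝ)) * γ t))
    (hΥ : Υ = (t : ℝ) * ((μ A).toReal + N (A.indicator fun _ => (1 : ℝ)) * γ t) + Ξ)
    (k : ℕ) :
    |(μ (avoidWindow f 0 (k * (ℓ + t)) A)).toReal - L ^ k| ≤
      (k : ℝ) * Υ * (L + Υ) ^ (k - 1) :=
  block_power_estimate_general μ f hf 𝒞 N γ hγmono hγ0 hdecay A hA hind R hR ℓ t hℓPA L Ξ Υ hL hΞ hΥ
    k
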